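/- arXiv:2503.03382 — 2 statements merged into one kernel-verified Lean document; each statement's English description precedes it below -/
import Mathlib

section
/- Let θ_0,...,θ_K ∈ ℝ^D each be strictly increasing in coordinates, with δ := min over k and i of (θ_{k,i+1} - θ_{k,i}) > 0. Let ε := δ/3. Then any θ ∈ ℝ^D within Euclidean distance ε of some Bézier curve point b(t) (t ∈ [0,1]) satisfies θ_i < θ_{i+1} for all i = 1,...,D-1. -/
/-!
The Bernstein weights `C(K,k) (1-t)^(K-k) t^k` are nonnegative on `[0,1]` and sum to `1`, so
every point of the Bézier curve is a convex combination of the control points. The half-space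
`{x | δ ≤ x (i+1) - x i}` is convex and contains every `θ_k`, hence also `b(t)`. Moving from `b(t)`
to `θ` changes each coordinate by at most `‖b(t) - θ‖ < δ/3`, so the gap `θ (i+1) - θ i` stays
above `δ - 2δ/3 > 0`.
-/

open Finset

noncomputable def bezierCurve {E : Type*} [AddCommGroup E] [Module ℝ E] {K : ℕ}
    (θ : Fin (K + 1) → E) (t : ℝ) : E :=
  ∑ k : Fin (K + 1), ((K.choose k : ℝ) * (1 - t) ^ (K - (k : ℕ)) * t ^ (k : ℕ)) • θ k

lemma sum_choose_mul_one_sub_pow_mul_pow {R : Type*} [CommRing R] (K : ℕ) (t : R) :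
    ∑ k : Fin (K + 1), (K.choose k : R) * (1 - t) ^ (K - (k : ℕ)) * t ^ (k : ℕ) = 1 := by
  rw [Fin.sum_univ_eq_sum_range (fun k => (K.choose k : R) * (1 - t) ^ (K - k) * t ^ k)]
  calc _ = (t + (1 - t)) ^ K := by rw [add_pow]; exact sum_congr rfl fun k _ => by ring
    _ = 1 := by rw [add_sub_cancel, one_pow]

lemma choose_mul_one_sub_pow_mul_pow_nonneg {R : Type*} [CommRing R] [PartialOrder R]
    [IsOrderedRing R] (K k : ℕ) {t : R} (ht : t ∈ Set.Icc 0 1) :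
    0 ≤ (K.choose k : R) * (1 - t) ^ (K - k) * t ^ k := by
  have : 0 ≤ 1 - t := sub_nonneg.mpr ht.2
  have := ht.1
  positivity

lemma bezierCurve_mem_of_convex {E : Type*} [AddCommGroup E] [Module ℝ E] {K : ℕ}
    {θ : Fin (K + 1) → E} {s : Set E} (hs : Convex ℝ s) (hθ : ∀ k, θ k ∈ s) {t : ℝ}
    (ht : t ∈ Set.Icc 0 1) : bezierCurve θ t ∈ s :=
  hs.sum_mem (fun k _ => choose_mul_one_sub_pow_mul_pow_nonneg K k ht)
    (sum_choose_mul_one_sub_pow_mul_pow K t) (fun k _ => hθ k)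

lemma convex_setOf_le_apply_sub_apply {p : ENNReal} {ι : Type*} (δ : ℝ) (i j : ι) :
    Convex ℝ {x : PiLp p (fun _ : ι => ℝ) | δ ≤ x j - x i} :=
  convex_halfSpace_ge
    (PiLp.projₗ p (fun _ : ι => ℝ) j - PiLp.projₗ (𝕜 := ℝ) p (fun _ : ι => ℝ) i).isLinear δ

lemma apply_lt_apply_of_norm_sub_lt {p : ENNReal} [Fact (1 ≤ p)] {ι : Type*} [Fintype ι]
    {b v : PiLp p (fun _ : ι => ℝ)} {i j : ι} {δ ε : ℝ} (hb : δ ≤ b j - b i)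
    (hbv : ‖b - v‖ < ε) (hεδ : 2 * ε ≤ δ) : v i < v j := by
  have hi := abs_le.mp (PiLp.norm_apply_le (b - v) i)
  have hj := abs_le.mp (PiLp.norm_apply_le (b - v) j)
  simp only [PiLp.sub_apply] at hi hj
  linarith [hi.1, hj.2]

theorem tube_strictly_increasing
    (K D : ℕ) (θ : Fin (K + 1) → EuclideanSpace ℝ (Fin D))
    (δ : ℝ) (hδpos : 0 < δ)
    (hδ : ∀ k : Fin (K + 1), ∀ i : ℕ, ∀ hi : i + 1 < D,
      δ ≤ θ k ⟨i + 1, hi⟩ - θ k ⟨i, Nat.lt_of_succ_lt hi⟩)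
    (ε : ℝ) (hε : ε = δ / 3)
    (v : EuclideanSpace ℝ (Fin D))
    (hv : ∃ t ∈ Set.Icc (0:ℝ) 1,
      ‖(∑ k : Fin (K + 1),
          ((K.choose k : ℝ) * (1 - t) ^ (K - (k : ℕ)) * t ^ (k : ℕ)) • θ k) - v‖ < ε) :
    ∀ i : ℕ, ∀ hi : i + 1 < D, v ⟨i, Nat.lt_of_succ_lt hi⟩ < v ⟨i + 1, hi⟩ := by
  obtain ⟨t, ht, hbv⟩ := hv
  intro i hi
  have hgap := bezierCurve_mem_of_convex (convex_setOf_le_apply_sub_apply δ _ _)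
    (fun k => hδ k i hi) ht
  exact apply_lt_apply_of_norm_sub_lt hgap hbv (by linarith)
end

section
/- Let θ_0,...,θ_K ∈ ℝ^D each be strictly increasing in coordinates. Then there exists ε > 0 such that for every nontrivial permutation g ∈ S_D acting on ℝ^D by permuting coordinates and every θ in the ε-tube around the Bézier curve b, the permuted vector gθ is not in the ε-tube. -/
/-!
Every control point lies in the convex set of vectors whose coordinates increase with gaps at
least `m`, for some `m > 0`, so the whole Bézier curve does. A point within `m / 2` of such a
vector is still strictly increasing in coordinates. If both `θ` and `gθ = θ ∘ g⁻¹` are strictly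
increasing, then `g⁻¹` is a strictly monotone permutation of `Fin D`, hence the identity.
-/

open Finset

noncomputable def bernsteinWeight (K k : ℕ) (t : ℝ) : ℝ :=
  K.choose k * (1 - t) ^ (K - k) * t ^ k

lemma bernsteinWeight_nonneg {t : ℝ} (ht : t ∈ Set.Icc (0 : ℝ) 1) (K k : ℕ) :
    0 ≤ bernsteinWeight K k t := by
  have : 0 ≤ 1 - t := sub_nonneg.2 ht.2
  have := ht.1
  unfold bernsteinWeight
  positivity

lemma sum_bernsteinWeight (K : ℕ) (t : ℝ) : ∑ k : Fin (K + 1), bernsteinWeight K k t = 1 := by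
  rw [Fin.sum_univ_eq_sum_range (bernsteinWeight K · t)]
  calc ∑ k ∈ range (K + 1), bernsteinWeight K k t
      = ∑ k ∈ range (K + 1), t ^ k * (1 - t) ^ (K - k) * K.choose k :=
        sum_congr rfl fun k _ => by unfold bernsteinWeight; ring
    _ = 1 := by rw [← add_pow, add_sub_cancel, one_pow]

noncomputable def bezier {E : Type*} [AddCommGroup E] [Module ℝ E] (K : ℕ)
    (θ : Fin (K + 1) → E) (t : ℝ) : E :=
  ∑ k : Fin (K + 1), bernsteinWeight K k t • θ k

lemma Convex.bezier_mem {E : Type*} [AddCommGroup E] [Module ℝ E] {s : Set E} (hs : Convex ℝ s)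
    {K : ℕ} {θ : Fin (K + 1) → E} (hθ : ∀ k, θ k ∈ s) {t : ℝ} (ht : t ∈ Set.Icc (0 : ℝ) 1) :
    bezier K θ t ∈ s :=
  hs.sum_mem (fun k _ => bernsteinWeight_nonneg ht K k) (sum_bernsteinWeight K t)
    fun k _ => hθ k

section CoordGap

variable {ι : Type*} [Preorder ι]

def CoordGapGE (m : ℝ) (x : EuclideanSpace ℝ ι) : Prop :=
  ∀ ⦃i j : ι⦄, i < j → x i + m ≤ x j

lemma convex_setOf_coordGapGE (m : ℝ) : Convex ℝ {x : EuclideanSpace ℝ ι | CoordGapGE m x} := by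
  intro x hx y hy a b ha hb hab i j hij
  have hxij := mul_le_mul_of_nonneg_left (hx hij) ha
  have hyij := mul_le_mul_of_nonneg_left (hy hij) hb
  simp only [PiLp.add_apply, PiLp.smul_apply, smul_eq_mul]
  linear_combination hxij + hyij - m * hab

lemma CoordGapGE.strictMono_of_norm_sub_lt [Fintype ι] {ε : ℝ} {x v : EuclideanSpace ℝ ι}
    (hx : CoordGapGE (2 * ε) x) (hv : ‖x - v‖ < ε) : StrictMono fun i => v i := by
  have hclose : ∀ i, |x i - v i| < ε := fun i =>
    (PiLp.norm_apply_le (x - v) i).trans_lt hv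
  intro i j hij
  dsimp only
  linarith [hx hij, (abs_lt.1 (hclose i)).1, (abs_lt.1 (hclose j)).2]

lemma exists_pos_forall_coordGapGE [Finite ι] {κ : Type*} [Finite κ]
    {x : κ → EuclideanSpace ℝ ι} (hx : ∀ k, StrictMono fun i => x k i) :
    ∃ m > 0, ∀ k, CoordGapGE m (x k) := by
  let gap : κ × {p : ι × ι // p.1 < p.2} → ℝ := fun q => x q.1 q.2.1.2 - x q.1 q.2.1.1
  have hgap : ∀ q, 0 < gap q := fun q => sub_pos.2 (hx q.1 q.2.2)
  suffices ∃ m > 0, ∀ q, m ≤ gap q by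
    obtain ⟨m, hm, hle⟩ := this
    exact ⟨m, hm, fun k i j hij => by linarith [hle (k, ⟨(i, j), hij⟩)]⟩
  cases isEmpty_or_nonempty (κ × {p : ι × ι // p.1 < p.2}) with
  | inl _ => exact ⟨1, one_pos, isEmptyElim⟩
  | inr _ =>
    obtain ⟨q₀, hq₀⟩ := Finite.exists_min gap
    exact ⟨gap q₀, hgap q₀, hq₀⟩

end CoordGap

lemma Equiv.Perm.eq_one_of_strictMono {α : Type*} [LinearOrder α] [WellFoundedLT α]
    {σ : Equiv.Perm α} (hσ : StrictMono σ) : σ = 1 :=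
  Equiv.ext <| congrFun <| (hσ.range_inj strictMono_id).1 <| by simp

lemma Equiv.Perm.eq_one_of_strictMono_comp {α β : Type*} [LinearOrder α] [WellFoundedLT α]
    [Preorder β] {f : α → β} {σ : Equiv.Perm α} (hf : StrictMono f) (hfσ : StrictMono (f ∘ σ)) :
    σ = 1 :=
  eq_one_of_strictMono fun _ _ hab => hf.lt_iff_lt.1 (hfσ hab)

lemma Fin.strictMono_of_lt_add_one {D : ℕ} {β : Type*} [Preorder β] {f : Fin D → β}
    (hf : ∀ i : ℕ, ∀ hi : i + 1 < D, f ⟨i, Nat.lt_of_succ_lt hi⟩ < f ⟨i + 1, hi⟩) :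
    StrictMono f := by
  cases D with
  | zero => exact fun i => i.elim0
  | succ D => exact Fin.strictMono_iff_lt_succ.2 fun i => hf i (Nat.succ_lt_succ i.2)

theorem tube_permutation_free
    (K D : ℕ) (θ : Fin (K + 1) → EuclideanSpace ℝ (Fin D))
    (hθ : ∀ k : Fin (K + 1), ∀ i : ℕ, ∀ hi : i + 1 < D,
      θ k ⟨i, Nat.lt_of_succ_lt hi⟩ < θ k ⟨i + 1, hi⟩) :
    ∃ ε > (0:ℝ), ∀ g : Equiv.Perm (Fin D), g ≠ 1 →
      ∀ v gv : EuclideanSpace ℝ (Fin D), (∀ i, gv i = v (g⁻¹ i)) →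
        (∃ t ∈ Set.Icc (0:ℝ) 1,
          ‖(∑ k : Fin (K + 1),
              ((K.choose k : ℝ) * (1 - t) ^ (K - (k : ℕ)) * t ^ (k : ℕ)) • θ k) - v‖ < ε) →
        ¬ (∃ t ∈ Set.Icc (0:ℝ) 1,
          ‖(∑ k : Fin (K + 1),
              ((K.choose k : ℝ) * (1 - t) ^ (K - (k : ℕ)) * t ^ (k : ℕ)) • θ k) - gv‖ < ε) := by
  obtain ⟨m, hm, hθm⟩ :=
    exists_pos_forall_coordGapGE fun k => Fin.strictMono_of_lt_add_one (hθ k)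
  have hcurve : ∀ t ∈ Set.Icc (0 : ℝ) 1, CoordGapGE (2 * (m / 2)) (bezier K θ t) := fun t ht => by
    rw [mul_div_cancel₀ m two_ne_zero]
    exact (convex_setOf_coordGapGE m).bezier_mem hθm ht
  refine ⟨m / 2, half_pos hm, ?_⟩
  rintro g hg v gv hgv ⟨t, ht, hvt⟩ ⟨s, hs, hgvs⟩
  have hv_mono := (hcurve t ht).strictMono_of_norm_sub_lt hvt
  have hgv_mono := (hcurve s hs).strictMono_of_norm_sub_lt hgvs
  simp only [hgv] at hgv_mono
  exact hg (inv_eq_one.1 (Equiv.Perm.eq_one_of_strictMono_comp hv_mono hgv_mono))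
end
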